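/- arXiv:1905.10582 — 4 statements merged into one kernel-verified Lean document; each statement's English description precedes it below -/
import Mathlib

section
/- Let z = (z_1,...,z_n) be in the unit sphere of C^n (i.e. |z_1|^2 + ... + |z_n|^2 = 1) and suppose that conj(z_i) z_j = conj(z_j) z_i for all i, j. Then there exist a real number θ and real numbers x_1,...,x_n with x_1^2 + ... + x_n^2 = 1 such that z_i = x_i e^{iθ} for every i. -/
/-- Every point of the Lie sphere (unit sphere points with conj(z_i) z_j = conj(z_j) z_i)
is of the form e^{iθ}·x for a real unit vector x. -/
theorem lie_sphere_param (n : ℕ) (z : Fin n → ℂ)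
    (hnorm : ∑ i, ‖z i‖ ^ 2 = 1)
    (hsym : ∀ i j, (starRingEnd ℂ) (z i) * z j = (starRingEnd ℂ) (z j) * z i) :
    ∃ (θ : ℝ) (x : Fin n → ℝ), (∑ i, x i ^ 2 = 1) ∧
      ∀ i, z i = (x i : ℂ) * Complex.exp (θ * Complex.I) := by
  have hex : ∃ i, z i ≠ 0 := by
    by_contra h
    push_neg at h
    simp [h] at hnorm
  obtain ⟨i₀, hi₀⟩ := hex
  have habs : ‖z i₀‖ ≠ 0 := by simpa using hi₀
  set θ := (z i₀).arg with hθ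
  have hc : (‖z i₀‖ : ℂ) * Complex.exp (θ * Complex.I) = z i₀ :=
    Complex.norm_mul_exp_arg_mul_I (z i₀)
  have hreal : ∀ j, ((starRingEnd ℂ) (z i₀) * z j).im = 0 := by
    intro j
    have h := hsym i₀ j
    have hconj : (starRingEnd ℂ) ((starRingEnd ℂ) (z i₀) * z j)
        = (starRingEnd ℂ) (z i₀) * z j := by
      rw [map_mul, Complex.conj_conj, mul_comm, h]
    exact Complex.conj_eq_iff_im.mp hconj
  have key : ∀ j, (starRingEnd ℂ) (z i₀) * z j
      = ((((starRingEnd ℂ) (z i₀) * z j).re : ℝ) : ℂ) := by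
    intro j
    apply Complex.ext <;> simp [hreal j]
  refine ⟨θ, fun j => ((starRingEnd ℂ) (z i₀) * z j).re / ‖z i₀‖, ?_, ?_⟩
  · have hsq : ∀ j, (((starRingEnd ℂ) (z i₀) * z j).re / ‖z i₀‖) ^ 2
        = ‖z j‖ ^ 2 := by
      intro j
      have h1 : ((starRingEnd ℂ) (z i₀) * z j).re ^ 2
          = Complex.normSq ((starRingEnd ℂ) (z i₀) * z j) := by
        simp [Complex.normSq_apply, hreal j, sq]
      have h2 : Complex.normSq ((starRingEnd ℂ) (z i₀) * z j)
          = ‖z i₀‖ ^ 2 * ‖z j‖ ^ 2 := by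
        simp [Complex.normSq_eq_norm_sq, mul_pow]
      rw [div_pow, h1, h2]
      field_simp
    rw [Finset.sum_congr rfl (fun j _ => hsq j)]
    exact hnorm
  · intro j
    have habsC : (‖z i₀‖ : ℂ) ≠ 0 := by exact_mod_cast habs
    have hns : ((Complex.normSq (z i₀) : ℝ) : ℂ) ≠ 0 := by
      simpa [Complex.normSq_eq_norm_sq] using pow_ne_zero 2 habsC
    have hne : ((Complex.normSq (z i₀) : ℝ) : ℂ) = (‖z i₀‖ : ℂ) ^ 2 := by
      norm_cast
      rw [Complex.normSq_eq_norm_sq]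
    set r := ((starRingEnd ℂ) (z i₀) * z j).re with hr
    have h3 : z j * ((Complex.normSq (z i₀) : ℝ) : ℂ) = (r : ℂ) * z i₀ := by
      rw [← key j, ← Complex.mul_conj]
      ring
    have h4 : (((r / ‖z i₀‖ : ℝ)) : ℂ) * Complex.exp (↑θ * Complex.I)
        * ((Complex.normSq (z i₀) : ℝ) : ℂ) = (r : ℂ) * z i₀ := by
      conv_rhs => rw [← hc]
      rw [hne]
      push_cast
      field_simp
    exact mul_right_cancel₀ hns (h3.trans h4.symm)
end

section
/- Let H ⊆ K be complex Hilbert spaces, let N_1,...,N_n be commuting bounded operators on K leaving H invariant with S_i = N_i|_H, and suppose each N_i* commutes with each N_j. Suppose K is the closed linear span of vectors of the form N_1*^{k_1} ··· N_n*^{k_n} x with x ∈ H and k_i nonnegative integers. If S_i* S_j = S_j* S_i in B(H) for some i, j, then N_i* N_j = N_j* N_i in B(K). -/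
open ContinuousLinearMap

lemma adjoint_list_prod' {K : Type*} [NormedAddCommGroup K] [InnerProductSpace ℂ K]
    [CompleteSpace K] (l : List (K →L[ℂ] K)) :
    adjoint l.prod = (l.map adjoint).reverse.prod := by
  induction l with
  | nil => simp [← star_eq_adjoint]
  | cons a t ih => rw [List.prod_cons, ← star_eq_adjoint, star_mul, star_eq_adjoint,
      star_eq_adjoint, ih]; simp

lemma list_prod_mem' {K : Type*} [NormedAddCommGroup K] [InnerProductSpace ℂ K]
    (H : Submodule ℂ K) (l : List (K →L[ℂ] K)) (hl : ∀ T ∈ l, ∀ x ∈ H, T x ∈ H) :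
    ∀ x ∈ H, l.prod x ∈ H := by
  induction l with
  | nil => intro x hx; simpa using hx
  | cons a t ih =>
    intro x hx
    rw [List.prod_cons, ContinuousLinearMap.mul_apply]
    exact hl a (by simp) _ (ih (fun T hT => hl T (by simp [hT])) x hx)

/-- Lemma 3.1: for a subnormal tuple S with minimal normal extension N (minimality given
by the spanning condition), the relation S_i* S_j = S_j* S_i on H lifts to
N_i* N_j = N_j* N_i on K. -/
theorem lifting_selfadjoint_relation {K : Type*} [NormedAddCommGroup K]
    [InnerProductSpace ℂ K] [CompleteSpace K]
    (n : ℕ) (N : Fin n → K →L[ℂ] K) (H : Submodule ℂ K)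
    (hHclosed : IsClosed (H : Set K))
    (hcomm : ∀ i j, Commute (N i) (N j))
    (hadjcomm : ∀ i j, Commute (ContinuousLinearMap.adjoint (N i)) (N j))
    (hinv : ∀ i, ∀ x ∈ H, N i x ∈ H)
    (hspan : (Submodule.span ℂ {v : K | ∃ (k : Fin n → ℕ) (x : K), x ∈ H ∧
        v = (List.ofFn fun i : Fin n => (ContinuousLinearMap.adjoint (N i)) ^ (k i)).prod x}).topologicalClosure = ⊤)
    (i j : Fin n)
    (hS : ∀ x ∈ H, ∀ y ∈ H, (inner ℂ (N j x) (N i y) : ℂ) = inner ℂ (N i x) (N j y)) :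
    ContinuousLinearMap.adjoint (N i) * N j = ContinuousLinearMap.adjoint (N j) * N i := by
  classical
  set Ns : Fin n → K →L[ℂ] K := fun p => adjoint (N p) with hNs
  set L : (Fin n → ℕ) → K →L[ℂ] K := fun k => (List.ofFn fun p => (Ns p) ^ (k p)).prod with hL
  set M : (Fin n → ℕ) → K →L[ℂ] K := fun k => adjoint (L k) with hM
  have app : ∀ (A B : K →L[ℂ] K), Commute A B → ∀ v : K, A (B v) = B (A v) := by
    intro A B h v
    rw [← ContinuousLinearMap.mul_apply, h.eq, ContinuousLinearMap.mul_apply]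
  have cNNs : ∀ p q, Commute (N p) (Ns q) := fun p q => (hadjcomm q p).symm
  have hadjpow : ∀ p m, adjoint ((Ns p) ^ m) = (N p) ^ m := by
    intro p m
    rw [hNs]; simp only [← star_eq_adjoint, star_pow, star_star]
  have cT_L : ∀ (T : K →L[ℂ] K), (∀ p, Commute T (Ns p)) → ∀ k, Commute T (L k) := by
    intro T hT k
    refine Commute.list_prod_right _ _ ?_
    intro b hb
    rw [List.mem_ofFn] at hb
    obtain ⟨p, rfl⟩ := hb
    exact (hT p).pow_right _
  have hMlist : ∀ k, M k = ((List.ofFn fun p => (Ns p) ^ (k p)).map adjoint).reverse.prod :=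
    fun k => adjoint_list_prod' _
  have cT_M : ∀ (T : K →L[ℂ] K), (∀ p, Commute T (N p)) → ∀ k, Commute T (M k) := by
    intro T hT k
    rw [hMlist k]
    refine Commute.list_prod_right _ _ ?_
    intro b hb
    simp only [List.mem_reverse, List.mem_map, List.mem_ofFn] at hb
    obtain ⟨_, ⟨p, rfl⟩, rfl⟩ := hb
    rw [hadjpow]
    exact (hT p).pow_right _
  have cN_L : ∀ q k, Commute (N q) (L k) := fun q k => cT_L (N q) (fun p => cNNs q p) k
  have cN_M : ∀ q k, Commute (N q) (M k) := fun q k => cT_M (N q) (fun p => hcomm q p) k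
  have cM_L : ∀ k l, Commute (M k) (L l) :=
    fun k l => cT_L (M k) (fun p => (cT_M (Ns p) (fun q => hadjcomm p q) k).symm) l
  have hpowinv : ∀ p m, ∀ x ∈ H, ((N p) ^ m) x ∈ H := by
    intro p m
    induction m with
    | zero => intro x hx; simpa using hx
    | succ m ih =>
      intro x hx
      rw [pow_succ, ContinuousLinearMap.mul_apply]
      exact ih _ (hinv p x hx)
  have hMinv : ∀ k, ∀ x ∈ H, M k x ∈ H := by
    intro k
    rw [hMlist k]
    refine list_prod_mem' H _ ?_
    intro T hT
    simp only [List.mem_reverse, List.mem_map, List.mem_ofFn] at hT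
    obtain ⟨_, ⟨p, rfl⟩, rfl⟩ := hT
    rw [hadjpow]
    exact hpowinv p _
  -- the key reduction
  have reduce : ∀ (a b : Fin n) (k l : Fin n → ℕ) (x y : K),
      (inner ℂ ((adjoint (N a) * N b) (L k x)) (L l y) : ℂ)
        = inner ℂ (N b (M l x)) (N a (M k y)) := by
    intro a b k l x y
    calc (inner ℂ ((adjoint (N a) * N b) (L k x)) (L l y) : ℂ)
        = inner ℂ (N b (L k x)) (N a (L l y)) := by
          rw [ContinuousLinearMap.mul_apply]; exact adjoint_inner_left (N a) (L l y) (N b (L k x))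
      _ = inner ℂ (L k (N b x)) (L l (N a y)) := by
          rw [app _ _ (cN_L b k), app _ _ (cN_L a l)]
      _ = inner ℂ (N b x) (M k (L l (N a y))) := (adjoint_inner_right (L k) _ _).symm
      _ = inner ℂ (N b x) (L l (N a (M k y))) := by
          rw [app _ _ (cM_L k l), app _ _ (cN_M a k).symm]
      _ = inner ℂ (M l (N b x)) (N a (M k y)) := (adjoint_inner_left (L l) _ _).symm
      _ = inner ℂ (N b (M l x)) (N a (M k y)) := by rw [app _ _ (cN_M b l)]
  set T : K →L[ℂ] K := adjoint (N i) * N j - adjoint (N j) * N i with hT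
  have key : ∀ (k l : Fin n → ℕ) (x y : K), x ∈ H → y ∈ H →
      (inner ℂ (T (L k x)) (L l y) : ℂ) = 0 := by
    intro k l x y hx hy
    rw [hT]
    rw [sub_apply, inner_sub_left, reduce i j k l x y, reduce j i k l x y,
      hS (M l x) (hMinv l x hx) (M k y) (hMinv k y hy), sub_self]
  -- the spanning set
  set Sset : Set K := {v : K | ∃ (k : Fin n → ℕ) (x : K), x ∈ H ∧ v = L k x} with hSset
  have hdense : ∀ (p : Submodule ℂ K), IsClosed (p : Set K) → Sset ⊆ p → ∀ v : K, v ∈ p := by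
    intro p hp hsub v
    have h1 : Submodule.span ℂ Sset ≤ p := Submodule.span_le.mpr hsub
    have h2 : (Submodule.span ℂ Sset).topologicalClosure ≤ p :=
      Submodule.topologicalClosure_minimal _ h1 hp
    have : (Submodule.span ℂ Sset).topologicalClosure = ⊤ := hspan
    rw [this] at h2
    exact h2 Submodule.mem_top
  have step1 : ∀ v ∈ Sset, ∀ w : K, (inner ℂ (T v) w : ℂ) = 0 := by
    intro v hv w
    obtain ⟨k, x, hx, rfl⟩ := hv
    have := hdense _ (isClosed_ker (innerSL ℂ (T (L k x)))) ?_ w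
    · simpa using this
    · rintro u ⟨l, y, hy, rfl⟩
      simpa using key k l x y hx hy
  have step2 : ∀ v w : K, (inner ℂ (T v) w : ℂ) = 0 := by
    intro v w
    have := hdense _ (isClosed_ker ((innerSL ℂ w).comp T)) ?_ v
    · rw [inner_eq_zero_symm]
      simpa using this
    · intro u hu
      simp only [SetLike.mem_coe, LinearMap.mem_ker, ContinuousLinearMap.coe_coe, ContinuousLinearMap.coe_comp',
        Function.comp_apply, innerSL_apply_apply]
      rw [← inner_eq_zero_symm]
      exact step1 u hu w
  have hT0 : T = 0 := by
    ext v
    rw [zero_apply, ← inner_self_eq_zero (𝕜 := ℂ)]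
    exact step2 v (T v)
  exact sub_eq_zero.mp hT0
end

section
/- Let Z be a complex antisymmetric 2p × 2p matrix with Z Z* = I_{2p}. Then there exists a unitary matrix U such that U Z U^t equals the block-diagonal matrix with p blocks [[0,1],[−1,0]]. -/
open Module Submodule Finset

local notation "⟪" x ", " y "⟫" => @inner ℂ _ _ x y

lemma hua_aux {E : Type*} [NormedAddCommGroup E] [InnerProductSpace ℂ E]
    [FiniteDimensional ℂ E] (p : ℕ) (hrank : finrank ℂ E = 2 * p)
    (J : E → E)
    (hJJ : ∀ v, J (J v) = -v)
    (hJi : ∀ a b, ⟪J a, J b⟫ = ⟪b, a⟫)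
    (hJs : ∀ (c : ℂ) (v), J (c • v) = (starRingEnd ℂ c) • J v) :
    ∀ m, m ≤ p → ∃ u : Fin m → E,
      (∀ k l, ⟪u k, u l⟫ = if k = l then 1 else 0) ∧
      (∀ k l, ⟪u k, J (u l)⟫ = 0) := by
  -- automatic self-orthogonality
  have hself : ∀ v : E, ⟪v, J v⟫ = 0 := by
    intro v
    have h1 : ⟪J v, J (J v)⟫ = ⟪J v, v⟫ := hJi v (J v)
    rw [hJJ, inner_neg_right] at h1
    have h2 : ⟪J v, v⟫ = 0 := by linear_combination (-1/2 : ℂ) * h1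
    rw [← inner_conj_symm, h2, map_zero]
  intro m
  induction m with
  | zero => exact fun _ => ⟨fun i => i.elim0, fun k => k.elim0, fun k => k.elim0⟩
  | succ m ih =>
    intro hm
    obtain ⟨u, hu1, hu2⟩ := ih (by omega)
    set f : Fin m ⊕ Fin m → E := Sum.elim u (fun k => J (u k)) with hf
    set S : Submodule ℂ E := Submodule.span ℂ (Set.range f) with hS
    have hSrank : finrank ℂ S ≤ 2 * m := by
      have := finrank_range_le_card (R := ℂ) f
      simpa [Set.finrank, Fintype.card_sum, two_mul] using this
    have hbot : Sᗮ ≠ ⊥ := by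
      intro h
      have h2 := Submodule.finrank_add_finrank_orthogonal S
      rw [h, finrank_bot, hrank] at h2
      omega
    obtain ⟨w, hwS, hw0⟩ := Submodule.exists_mem_ne_zero_of_ne_bot hbot
    have hworth : ∀ x ∈ S, ⟪x, w⟫ = 0 := (Submodule.mem_orthogonal S w).mp hwS
    have hwu : ∀ k, ⟪u k, w⟫ = 0 := fun k =>
      hworth _ (Submodule.subset_span ⟨Sum.inl k, rfl⟩)
    have hwJu : ∀ k, ⟪J (u k), w⟫ = 0 := fun k =>
      hworth _ (Submodule.subset_span ⟨Sum.inr k, rfl⟩)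
    -- the quaternionic trick: w is automatically orthogonal to J of previous vectors
    have hkey : ∀ v : E, ⟪J v, w⟫ = 0 → ⟪w, J v⟫ = 0 ∧ ⟪v, J w⟫ = 0 := by
      intro v hv
      constructor
      · rw [← inner_conj_symm, hv, map_zero]
      · have h1 : ⟪J w, J (J v)⟫ = ⟪J v, w⟫ := hJi w (J v)
        rw [hJJ, inner_neg_right, hv] at h1
        have h2 : ⟪J w, v⟫ = 0 := by linear_combination -h1
        rw [← inner_conj_symm, h2, map_zero]
    set c : ℂ := ((‖w‖ : ℝ) : ℂ)⁻¹ with hc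
    have hcr : (starRingEnd ℂ) c = c := by
      simp [hc, ← Complex.ofReal_inv]
    have hnw : (‖w‖ : ℝ) ≠ 0 := norm_ne_zero_iff.mpr hw0
    set w' : E := c • w with hw'
    have hww : ⟪w', w'⟫ = 1 := by
      have hnwc : ((‖w‖ : ℝ) : ℂ) ≠ 0 := Complex.ofReal_ne_zero.mpr hnw
      rw [hw', inner_smul_left, inner_smul_right, hcr, inner_self_eq_norm_sq_to_K]
      field_simp [hc]
      simp [hc, hw0]
    refine ⟨Fin.snoc u w', ?_, ?_⟩
    · intro k l
      refine Fin.lastCases ?_ ?_ k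
      · refine Fin.lastCases ?_ ?_ l
        · rw [if_pos rfl]
          simpa only [Fin.snoc_last] using hww
        · intro l'
          have : ⟪w, u l'⟫ = 0 := by rw [← inner_conj_symm, hwu l', map_zero]
          simp [hw', inner_smul_left, this, Fin.snoc_castSucc, Fin.snoc_last,
            (Fin.castSucc_lt_last l').ne']
      · intro k'
        refine Fin.lastCases ?_ ?_ l
        · simp [hw', inner_smul_right, hwu k', Fin.snoc_castSucc, Fin.snoc_last,
            (Fin.castSucc_lt_last k').ne]
        · intro l'
          simp [Fin.snoc_castSucc, hu1 k' l', Fin.castSucc_inj]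
    · intro k l
      refine Fin.lastCases ?_ ?_ k
      · refine Fin.lastCases ?_ ?_ l
        · simp [hself, Fin.snoc_last]
        · intro l'
          have := (hkey (u l') (hwJu l')).1
          simp [hw', inner_smul_left, this, Fin.snoc_castSucc, Fin.snoc_last]
      · intro k'
        refine Fin.lastCases ?_ ?_ l
        · have := (hkey (u k') (hwJu k')).2
          simp [hw', hJs, inner_smul_right, this, Fin.snoc_castSucc, Fin.snoc_last]
        · intro l'
          simp [Fin.snoc_castSucc, hu2 k' l']

/-- Hua's theorem (even case): an antisymmetric unitary 2p × 2p complex matrix is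
unitarily congruent to the direct sum of p copies of [[0,1],[-1,0]]. -/
theorem hua_canonical_form_even (p : ℕ)
    (Z : Matrix (Fin (2*p)) (Fin (2*p)) ℂ)
    (hanti : Z.transpose = -Z)
    (hZ : Z * Z.conjTranspose = 1) :
    ∃ U : Matrix (Fin (2*p)) (Fin (2*p)) ℂ,
      U ∈ Matrix.unitaryGroup (Fin (2*p)) ℂ ∧
      U * Z * U.transpose = Matrix.of fun i j : Fin (2*p) =>
        if (i : ℕ) % 2 = 0 ∧ (j : ℕ) = (i : ℕ) + 1 then (1 : ℂ)
        else if (j : ℕ) % 2 = 0 ∧ (i : ℕ) = (j : ℕ) + 1 then -1 else 0 := by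
  classical
  set Jm : Matrix (Fin (2*p)) (Fin (2*p)) ℂ := Matrix.of fun i j : Fin (2*p) =>
        if (i : ℕ) % 2 = 0 ∧ (j : ℕ) = (i : ℕ) + 1 then (1 : ℂ)
        else if (j : ℕ) % 2 = 0 ∧ (i : ℕ) = (j : ℕ) + 1 then -1 else 0 with hJm
  -- matrix preliminaries
  have hmap : Z.map (starRingEnd ℂ) = -Z.conjTranspose := by
    ext i j
    have h1 : Z j i = -Z i j := by
      simpa using congrFun (congrFun hanti i) j
    simp [Matrix.map_apply, Matrix.conjTranspose_apply, h1]
  have key1 : Z * Z.map (starRingEnd ℂ) = -1 := by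
    rw [hmap, Matrix.mul_neg, hZ]
  have key2 : Z.transpose * Z.map (starRingEnd ℂ) = 1 := by
    rw [hanti, hmap, Matrix.neg_mul, Matrix.mul_neg, hZ, neg_neg]
  -- the antilinear map
  set J : EuclideanSpace ℂ (Fin (2*p)) → EuclideanSpace ℂ (Fin (2*p)) :=
    fun v => WithLp.toLp 2 (Z.mulVec (star (show Fin (2*p) → ℂ from v))) with hJdef
  have hJapp : ∀ (v : EuclideanSpace ℂ (Fin (2*p))),
      (show Fin (2*p) → ℂ from J v) = Z.mulVec (star (show Fin (2*p) → ℂ from v)) :=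
    fun v => rfl
  have hinner : ∀ x y : EuclideanSpace ℂ (Fin (2*p)),
      ⟪x, y⟫ = dotProduct (star (show Fin (2*p) → ℂ from x)) (show Fin (2*p) → ℂ from y) :=
    fun x y => by rw [EuclideanSpace.inner_eq_star_dotProduct, dotProduct_comm]
  have hstarJ : ∀ w : Fin (2*p) → ℂ,
      star (Z.mulVec (star w)) = (Z.map (starRingEnd ℂ)).mulVec w := by
    intro w
    rw [Matrix.star_mulVec]
    rw [show Z.conjTranspose = (Z.map (starRingEnd ℂ)).transpose from rfl]
    rw [Matrix.vecMul_transpose, star_star]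
  have hJJ : ∀ v, J (J v) = -v := by
    intro v
    show WithLp.toLp 2 (Z.mulVec (star (Z.mulVec (star (show Fin (2*p) → ℂ from v))))) = -v
    rw [hstarJ, Matrix.mulVec_mulVec, key1]
    show WithLp.toLp 2 ((-(1 : Matrix (Fin (2*p)) (Fin (2*p)) ℂ)).mulVec (show Fin (2*p) → ℂ from v)) = _
    rw [Matrix.neg_mulVec, Matrix.one_mulVec]
    rfl
  have hJi : ∀ a b, ⟪J a, J b⟫ = ⟪b, a⟫ := by
    intro a b
    rw [hinner, hinner]
    show dotProduct (star (Z.mulVec (star (show Fin (2*p) → ℂ from a))))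
        (Z.mulVec (star (show Fin (2*p) → ℂ from b))) = _
    rw [hstarJ, Matrix.dotProduct_mulVec, ← Matrix.mulVec_transpose,
      Matrix.mulVec_mulVec, key2, Matrix.one_mulVec, dotProduct_comm]
  have hJs : ∀ (c : ℂ) (v), J (c • v) = (starRingEnd ℂ c) • J v := by
    intro c v
    show WithLp.toLp 2 (Z.mulVec (star (c • (show Fin (2*p) → ℂ from v)))) = _
    rw [star_smul, Matrix.mulVec_smul]
    rfl
  have hJneg : ∀ v, J (-v) = -(J v) := by
    intro v
    have := hJs (-1) v
    simpa using this
  -- the adapted orthonormal family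
  obtain ⟨u, hu1, hu2⟩ := hua_aux p (by simp) J hJJ hJi hJs p le_rfl
  have halfLt : ∀ i : Fin (2*p), (i : ℕ)/2 < p := fun i => by
    have := i.isLt; omega
  set v : Fin (2*p) → EuclideanSpace ℂ (Fin (2*p)) := fun i =>
    if (i : ℕ) % 2 = 0 then u ⟨(i : ℕ)/2, halfLt i⟩ else -(J (u ⟨(i : ℕ)/2, halfLt i⟩)) with hv
  have hveven : ∀ i : Fin (2*p), (i : ℕ) % 2 = 0 → v i = u ⟨(i : ℕ)/2, halfLt i⟩ := by
    intro i h
    simp only [hv]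
    exact if_pos h
  have hvodd : ∀ i : Fin (2*p), (i : ℕ) % 2 = 1 → v i = -(J (u ⟨(i : ℕ)/2, halfLt i⟩)) := by
    intro i h
    simp only [hv]
    exact if_neg (by omega)
  have hvON : ∀ k l, ⟪v k, v l⟫ = if k = l then 1 else 0 := by
    intro k l
    have hkl : ((⟨(k : ℕ)/2, halfLt k⟩ : Fin p) = ⟨(l : ℕ)/2, halfLt l⟩) ↔ (k : ℕ)/2 = (l : ℕ)/2 :=
      by simp [Fin.ext_iff]
    rcases Nat.mod_two_eq_zero_or_one (k : ℕ) with hk | hk <;>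
      rcases Nat.mod_two_eq_zero_or_one (l : ℕ) with hl | hl
    · have hiff : ((⟨(k : ℕ)/2, halfLt k⟩ : Fin p) = ⟨(l : ℕ)/2, halfLt l⟩) ↔ k = l := by
        rw [hkl, Fin.ext_iff]; omega
      rw [hveven k hk, hveven l hl, hu1]
      simp [hiff]
    · have hne : k ≠ l := by rw [Fin.ne_iff_vne]; omega
      rw [hveven k hk, hvodd l hl, inner_neg_right, hu2, neg_zero, if_neg hne]
    · have hne : k ≠ l := by rw [Fin.ne_iff_vne]; omega
      rw [hvodd k hk, hveven l hl, inner_neg_left, ← inner_conj_symm, hu2, map_zero,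
        neg_zero, if_neg hne]
    · have hiff : ((⟨(k : ℕ)/2, halfLt k⟩ : Fin p) = ⟨(l : ℕ)/2, halfLt l⟩) ↔ k = l := by
        rw [hkl, Fin.ext_iff]; omega
      rw [hvodd k hk, hvodd l hl, inner_neg_neg, hJi, hu1]
      simp only [eq_comm (a := (⟨(l : ℕ)/2, halfLt l⟩ : Fin p))]
      simp [hiff]
  set V : Matrix (Fin (2*p)) (Fin (2*p)) ℂ := Matrix.of fun i k => v k i with hV
  have hV1 : V.conjTranspose * V = 1 := by
    ext k l
    rw [Matrix.mul_apply, Matrix.one_apply]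
    have h := hvON k l
    rw [hinner] at h
    simpa [Matrix.conjTranspose_apply, hV, dotProduct] using h
  have hZV : Z * (V.map (starRingEnd ℂ)) = V * Jm := by
    ext i k
    have hLHS : (Z * (V.map (starRingEnd ℂ))) i k = (show Fin (2*p) → ℂ from J (v k)) i := by
      rw [Matrix.mul_apply, hJapp]
      rfl
    rw [hLHS, Matrix.mul_apply]
    rcases Nat.mod_two_eq_zero_or_one (k : ℕ) with hk | hk
    · -- k even : single nonzero term at l = k+1
      have hk1 : (k : ℕ) + 1 < 2*p := by have := k.isLt; omega
      rw [Finset.sum_eq_single (⟨(k : ℕ)+1, hk1⟩ : Fin (2*p))]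
      · have hJmval : Jm ⟨(k : ℕ)+1, hk1⟩ k = -1 := by
          show (if ((k:ℕ)+1) % 2 = 0 ∧ (k:ℕ) = ((k:ℕ)+1)+1 then (1:ℂ)
            else if (k:ℕ) % 2 = 0 ∧ (k:ℕ)+1 = (k:ℕ)+1 then -1 else 0) = -1
          rw [if_neg (by omega), if_pos ⟨hk, rfl⟩]
        have hvv : v ⟨(k : ℕ)+1, hk1⟩ = -(J (u ⟨(k : ℕ)/2, halfLt k⟩)) := by
          rw [hvodd ⟨(k : ℕ)+1, hk1⟩ (show ((k:ℕ)+1) % 2 = 1 by omega)]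
          have hidx : (⟨((⟨(k:ℕ)+1, hk1⟩ : Fin (2*p)) : ℕ)/2,
              halfLt ⟨(k:ℕ)+1, hk1⟩⟩ : Fin p) = ⟨(k:ℕ)/2, halfLt k⟩ :=
            Fin.ext (show ((k:ℕ)+1)/2 = (k:ℕ)/2 by omega)
          rw [hidx]
        have hvk : v k = u ⟨(k : ℕ)/2, halfLt k⟩ := hveven k hk
        have h2 : V i ⟨(k : ℕ)+1, hk1⟩ =
            -((show Fin (2*p) → ℂ from J (u ⟨(k : ℕ)/2, halfLt k⟩)) i) := by
          show v ⟨(k : ℕ)+1, hk1⟩ i = _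
          rw [hvv]
          rfl
        rw [hJmval, hvk, h2]
        ring
      · intro b _ hb
        have hb' : (b : ℕ) ≠ (k : ℕ)+1 := fun h => hb (Fin.ext h)
        have hJm0 : Jm b k = 0 := by
          show (if (b:ℕ) % 2 = 0 ∧ (k:ℕ) = (b:ℕ)+1 then (1:ℂ)
            else if (k:ℕ) % 2 = 0 ∧ (b:ℕ) = (k:ℕ)+1 then -1 else 0) = 0
          rw [if_neg (by omega), if_neg (by omega)]
        show V i b * Jm b k = 0
        rw [hJm0, mul_zero]
      · intro h; exact absurd (Finset.mem_univ _) h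
    · -- k odd : single nonzero term at l = k-1
      have hk1 : (k : ℕ) - 1 < 2*p := by have := k.isLt; omega
      rw [Finset.sum_eq_single (⟨(k : ℕ)-1, hk1⟩ : Fin (2*p))]
      · have hJmval : Jm ⟨(k : ℕ)-1, hk1⟩ k = 1 := by
          show (if ((k:ℕ)-1) % 2 = 0 ∧ (k:ℕ) = ((k:ℕ)-1)+1 then (1:ℂ)
            else if (k:ℕ) % 2 = 0 ∧ ((k:ℕ)-1) = (k:ℕ)+1 then -1 else 0) = 1
          rw [if_pos (by omega)]
        have hvv : v ⟨(k : ℕ)-1, hk1⟩ = u ⟨(k : ℕ)/2, halfLt k⟩ := by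
          rw [hveven ⟨(k : ℕ)-1, hk1⟩ (show ((k:ℕ)-1) % 2 = 0 by omega)]
          have hidx : (⟨((⟨(k:ℕ)-1, hk1⟩ : Fin (2*p)) : ℕ)/2,
              halfLt ⟨(k:ℕ)-1, hk1⟩⟩ : Fin p) = ⟨(k:ℕ)/2, halfLt k⟩ :=
            Fin.ext (show ((k:ℕ)-1)/2 = (k:ℕ)/2 by omega)
          rw [hidx]
        have hvk : v k = -(J (u ⟨(k : ℕ)/2, halfLt k⟩)) := hvodd k hk
        have hJvk : J (v k) = u ⟨(k : ℕ)/2, halfLt k⟩ := by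
          rw [hvk, hJneg, hJJ, neg_neg]
        have h2 : V i ⟨(k : ℕ)-1, hk1⟩ =
            (show Fin (2*p) → ℂ from u ⟨(k : ℕ)/2, halfLt k⟩) i := by
          show v ⟨(k : ℕ)-1, hk1⟩ i = _
          rw [hvv]
        rw [hJmval, hJvk, h2]
        ring
      · intro b _ hb
        have hb' : (b : ℕ) ≠ (k : ℕ)-1 := fun h => hb (Fin.ext h)
        have hJm0 : Jm b k = 0 := by
          show (if (b:ℕ) % 2 = 0 ∧ (k:ℕ) = (b:ℕ)+1 then (1:ℂ)
            else if (k:ℕ) % 2 = 0 ∧ (b:ℕ) = (k:ℕ)+1 then -1 else 0) = 0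
          rw [if_neg (by omega), if_neg (by omega)]
        show V i b * Jm b k = 0
        rw [hJm0, mul_zero]
      · intro h; exact absurd (Finset.mem_univ _) h
  -- conclusion
  refine ⟨V.conjTranspose, ?_, ?_⟩
  · rw [Matrix.mem_unitaryGroup_iff]
    rw [Matrix.star_eq_conjTranspose, Matrix.conjTranspose_conjTranspose]
    exact hV1
  · have hUt : V.conjTranspose.transpose = V.map (starRingEnd ℂ) := by
      ext i j
      simp [Matrix.transpose_apply, Matrix.conjTranspose_apply, Matrix.map_apply]
    rw [hUt, Matrix.mul_assoc, hZV, ← Matrix.mul_assoc, hV1, Matrix.one_mul]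
end

section
/- Let ρ_S and ρ_T be semi-spectral (positive operator-valued) measures on a compact set E for operators on Hilbert spaces H and J respectively, and let X : H → J be bounded. Suppose that for every continuous function f in a family F which is dense enough that for every positive continuous φ on E there is a sequence f_m ∈ F with |f_m| < √φ on E and |f_m| → √φ η-a.e. for η = ⟨ρ_T(·)Xu, Xu⟩ + ⟨ρ_S(·)u, u⟩, one has ∫_E |f|^2 d⟨ρ_T Xu, Xu⟩ ≤ ‖X‖^2 ∫_E |f|^2 d⟨ρ_S u, u⟩ for all u ∈ H. Then ⟨ρ_T(B) Xu, Xu⟩ ≤ ‖X‖^2 ⟨ρ_S(B) u, u⟩ for every Borel set B ⊆ E and every u ∈ H. -/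
open MeasureTheory

/-- The measure-theoretic core of Theorem 2.1: integral inequalities over a rich family
of continuous functions upgrade, via the regularity (property (A)) density hypothesis,
to the semi-spectral measure domination ⟨ρ_T(B)Xu,Xu⟩ ≤ ‖X‖² ⟨ρ_S(B)u,u⟩. -/
theorem semispectral_domination {H J E : Type*}
    [NormedAddCommGroup H] [InnerProductSpace ℂ H]
    [NormedAddCommGroup J] [InnerProductSpace ℂ J]
    [MetricSpace E] [CompactSpace E] [MeasurableSpace E] [BorelSpace E]
    (X : H →L[ℂ] J)
    (μS : H → Measure E) (μT : J → Measure E)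
    (hSfin : ∀ u, IsFiniteMeasure (μS u))
    (hTfin : ∀ v, IsFiniteMeasure (μT v))
    (hSreg : ∀ u, (μS u).Regular)
    (hTreg : ∀ v, (μT v).Regular)
    (F : Set C(E, ℂ))
    (hdense : ∀ φ : C(E, ℝ), (∀ x, 0 < φ x) → ∀ u : H,
      ∃ f : ℕ → C(E, ℂ), (∀ m, f m ∈ F) ∧
        (∀ m x, ‖f m x‖ < Real.sqrt (φ x)) ∧
        (∀ᵐ x ∂(μT (X u) + μS u),
          Filter.Tendsto (fun m => ‖f m x‖) Filter.atTop (nhds (Real.sqrt (φ x)))))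
    (hineq : ∀ f ∈ F, ∀ u : H,
      ∫ x, ‖f x‖ ^ 2 ∂(μT (X u)) ≤ ‖X‖ ^ 2 * ∫ x, ‖f x‖ ^ 2 ∂(μS u)) :
    ∀ B : Set E, MeasurableSet B → ∀ u : H,
      μT (X u) B ≤ ENNReal.ofReal (‖X‖ ^ 2) * μS u B := by
  intro B hB u
  haveI := hSfin u
  haveI := hTfin (X u)
  haveI := hSreg u
  haveI := hTreg (X u)
  set ν := μT (X u) with hνdef
  set σ := μS u with hσdef
  set c := ‖X‖ ^ 2 with hcdef
  have hc0 : (0 : ℝ) ≤ c := by positivity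
  -- Step 1: the integral inequality for all positive continuous functions
  have step1 : ∀ φ : C(E, ℝ), (∀ x, 0 < φ x) →
      ∫ x, φ x ∂ν ≤ c * ∫ x, φ x ∂σ := by
    intro φ hφ
    obtain ⟨f, hfF, hflt, hfae⟩ := hdense φ hφ u
    have hbound : ∀ m x, ‖‖f m x‖ ^ 2‖ ≤ φ x := by
      intro m x
      rw [Real.norm_of_nonneg (by positivity)]
      calc ‖f m x‖ ^ 2 ≤ Real.sqrt (φ x) ^ 2 :=
            pow_le_pow_left₀ (norm_nonneg _) (hflt m x).le 2
        _ = φ x := Real.sq_sqrt (hφ x).le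
    have hφint : ∀ μ : Measure E, IsFiniteMeasure μ → Integrable (fun x => φ x) μ := by
      intro μ hμ
      exact φ.continuous.integrable_of_hasCompactSupport (HasCompactSupport.of_compactSpace _)
    have hae : ∀ᵐ x ∂(ν + σ),
        Filter.Tendsto (fun m => ‖f m x‖ ^ 2) Filter.atTop (nhds (φ x)) := by
      filter_upwards [hfae] with x hx
      have h2 := hx.pow 2
      rwa [Real.sq_sqrt (hφ x).le] at h2
    have haeν : ∀ᵐ x ∂ν,
        Filter.Tendsto (fun m => ‖f m x‖ ^ 2) Filter.atTop (nhds (φ x)) :=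
      hae.filter_mono (ae_mono (Measure.le_add_right le_rfl))
    have haeσ : ∀ᵐ x ∂σ,
        Filter.Tendsto (fun m => ‖f m x‖ ^ 2) Filter.atTop (nhds (φ x)) :=
      hae.filter_mono (ae_mono (Measure.le_add_left le_rfl))
    have hTν : Filter.Tendsto (fun m => ∫ x, ‖f m x‖ ^ 2 ∂ν) Filter.atTop
        (nhds (∫ x, φ x ∂ν)) :=
      tendsto_integral_of_dominated_convergence (fun x => φ x)
        (fun m => (((f m).continuous.norm.pow 2)).aestronglyMeasurable)
        (hφint ν inferInstance) (fun m => Filter.Eventually.of_forall (hbound m)) haeν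
    have hTσ : Filter.Tendsto (fun m => ∫ x, ‖f m x‖ ^ 2 ∂σ) Filter.atTop
        (nhds (∫ x, φ x ∂σ)) :=
      tendsto_integral_of_dominated_convergence (fun x => φ x)
        (fun m => (((f m).continuous.norm.pow 2)).aestronglyMeasurable)
        (hφint σ inferInstance) (fun m => Filter.Eventually.of_forall (hbound m)) haeσ
    exact le_of_tendsto_of_tendsto' hTν (hTσ.const_mul c)
      (fun m => hineq (f m) (hfF m) u)
  -- Step 2: domination on compacts inside opens
  have step2 : ∀ U : Set E, IsOpen U → ∀ K : Set E, IsCompact K → K ⊆ U →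
      ν K ≤ ENNReal.ofReal c * σ U := by
    intro U hU K hK hKU
    obtain ⟨g, hg0, hg1, hg01⟩ :=
      exists_continuous_zero_one_of_isClosed hU.isClosed_compl hK.isClosed
        (disjoint_compl_left.mono_right hKU)
    have key : ∀ ε : ℝ, 0 < ε →
        (ν K).toReal ≤ c * ((σ U).toReal + ε * (σ Set.univ).toReal) := by
      intro ε hε
      set φε : C(E, ℝ) := g + ContinuousMap.const E ε with hφε
      have hφεpos : ∀ x, 0 < φε x := by
        intro x
        have := (hg01 x).1
        simp only [hφε, ContinuousMap.add_apply, ContinuousMap.const_apply]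
        linarith
      have hφεint : Integrable (fun x => φε x) ν :=
        φε.continuous.integrable_of_hasCompactSupport (HasCompactSupport.of_compactSpace _)
      have hφεintσ : Integrable (fun x => φε x) σ :=
        φε.continuous.integrable_of_hasCompactSupport (HasCompactSupport.of_compactSpace _)
      have hKmeas : MeasurableSet K := hK.measurableSet
      have hUmeas : MeasurableSet U := hU.measurableSet
      have hlow : (ν K).toReal ≤ ∫ x, φε x ∂ν := by
        change ν.real K ≤ _
        rw [← integral_indicator_one hKmeas]
        refine integral_mono ((integrable_const (1 : ℝ)).indicator hKmeas) hφεint ?_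
        intro x
        by_cases hx : x ∈ K
        · have := hg1 hx
          simp only [Set.indicator_of_mem hx, Pi.one_apply, hφε,
            ContinuousMap.add_apply, ContinuousMap.const_apply, this]
          linarith
        · simp only [Set.indicator_of_notMem hx]
          exact (hφεpos x).le
      have hhigh : ∫ x, φε x ∂σ ≤ (σ U).toReal + ε * (σ Set.univ).toReal := by
        have hmono : ∀ x, φε x ≤ U.indicator (fun _ => (1 : ℝ)) x + ε := by
          intro x
          simp only [hφε, ContinuousMap.add_apply, ContinuousMap.const_apply]
          by_cases hx : x ∈ U
          · simp only [Set.indicator_of_mem hx]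
            linarith [(hg01 x).2]
          · have : g x = 0 := hg0 hx
            simp only [Set.indicator_of_notMem hx, this]
            linarith
        calc ∫ x, φε x ∂σ
            ≤ ∫ x, (U.indicator (fun _ => (1 : ℝ)) x + ε) ∂σ := by
              refine integral_mono hφεintσ ?_ hmono
              exact ((integrable_const (1 : ℝ)).indicator hUmeas).add (integrable_const ε)
          _ = (σ U).toReal + ε * (σ Set.univ).toReal := by
              rw [integral_add ((integrable_const (1 : ℝ)).indicator hUmeas)
                (integrable_const ε), integral_const, integral_indicator_const _ hUmeas]
              simp [mul_comm]
              rfl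
      have := step1 φε hφεpos
      have hchain : (ν K).toReal ≤ c * ((σ U).toReal + ε * (σ Set.univ).toReal) := by
        calc (ν K).toReal ≤ ∫ x, φε x ∂ν := hlow
          _ ≤ c * ∫ x, φε x ∂σ := this
          _ ≤ c * ((σ U).toReal + ε * (σ Set.univ).toReal) := by
              apply mul_le_mul_of_nonneg_left hhigh hc0
      exact hchain
    have hlim : (ν K).toReal ≤ c * (σ U).toReal := by
      refine le_of_forall_pos_le_add fun δ hδ => ?_
      set M := c * (σ Set.univ).toReal with hM
      have hM0 : 0 ≤ M := mul_nonneg hc0 ENNReal.toReal_nonneg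
      have hεpos : 0 < δ / (M + 1) := div_pos hδ (by linarith)
      have := key (δ / (M + 1)) hεpos
      have hexp : c * ((σ U).toReal + δ / (M + 1) * (σ Set.univ).toReal)
          = c * (σ U).toReal + M * (δ / (M + 1)) := by ring
      rw [hexp] at this
      have : M * (δ / (M + 1)) ≤ δ := by
        rw [mul_div_assoc']
        rw [div_le_iff₀ (by linarith)]
        nlinarith
      linarith [key (δ / (M + 1)) hεpos, hexp]
    calc ν K = ENNReal.ofReal ((ν K).toReal) :=
          (ENNReal.ofReal_toReal (measure_ne_top ν K)).symm
      _ ≤ ENNReal.ofReal (c * (σ U).toReal) := ENNReal.ofReal_le_ofReal hlim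
      _ = ENNReal.ofReal c * σ U := by
          rw [ENNReal.ofReal_mul hc0, ENNReal.ofReal_toReal (measure_ne_top σ U)]
  -- Step 3: domination on opens, by inner regularity of ν
  have step3 : ∀ U : Set E, IsOpen U → ν U ≤ ENNReal.ofReal c * σ U := by
    intro U hU
    refine le_of_forall_lt fun r hr => ?_
    obtain ⟨K, hKU, hKc, hrK⟩ := (hTreg (X u)).innerRegular hU r hr
    exact hrK.trans_le (step2 U hU K hKc hKU)
  -- Step 4: domination on Borel sets, by outer regularity of σ
  rcases eq_or_lt_of_le hc0 with hc0' | hcpos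
  · have hν0 : ν B = 0 := by
      have := step3 Set.univ isOpen_univ
      rw [← hc0'] at this
      simp only [ENNReal.ofReal_zero, zero_mul, nonpos_iff_eq_zero] at this
      exact le_antisymm ((measure_mono (Set.subset_univ B)).trans this.le) (zero_le)
    simp [hν0]
  · refine ENNReal.le_of_forall_pos_le_add fun ε hε hfin => ?_
    set c' := ENNReal.ofReal c with hc'
    have hc'0 : c' ≠ 0 := by
      simp only [hc', ne_eq, ENNReal.ofReal_eq_zero, not_le]
      exact hcpos
    have hc'top : c' ≠ ⊤ := ENNReal.ofReal_ne_top
    have hδ : (ε : ENNReal) / c' ≠ 0 := by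
      simp only [ne_eq, ENNReal.div_eq_zero_iff, not_or]
      exact ⟨by exact_mod_cast hε.ne', hc'top⟩
    obtain ⟨U, hBU, hUopen, hσU⟩ := B.exists_isOpen_lt_add (measure_ne_top σ B) hδ
    calc ν B ≤ ν U := measure_mono hBU
      _ ≤ c' * σ U := step3 U hUopen
      _ ≤ c' * (σ B + ε / c') := mul_le_mul_right hσU.le _
      _ = c' * σ B + c' * (ε / c') := by rw [mul_add]
      _ = c' * σ B + ε := by rw [ENNReal.mul_div_cancel hc'0 hc'top]
end
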